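/- arXiv:1512.08190 — 4 statements merged into one kernel-verified Lean document; each statement's English description precedes it below -/
import Mathlib

section
/- Let W be a reflexive Banach space and J : W → ℝ a C¹ functional. If (u₀,v₀) is a local minimizer of J restricted to the Nehari manifold N = {(u,v) ∈ W \ {0} : ⟨J'(u,v),(u,v)⟩ = 0}, and if the second derivative of t ↦ J(t·u₀, t·v₀) at t = 1 is nonzero, then (u₀,v₀) is a critical point of J on all of W (i.e. J'(u₀,v₀) = 0). -/
open Filter Set Topology Function

/-! Suppose `J'(w₀) ≠ 0` and pick `h` with `J'(w₀) h > 0`. For small `s < 0`, moving `w₀` to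
`w₀ + s h` strictly lowers `J` along every ray `t ↦ t (w₀ + s h)` with `t` near `1`.
Since `φ_{w₀}'(1) = 0 ≠ φ_{w₀}''(1)`, the point `t = 1` is a strict local extremum of the
fibering map `φ_{w₀}`, and a strict extremum survives small perturbations: `φ_{w₀ + s h}` has an
extremum of the same kind at some `t` near `1`, so `t (w₀ + s h)` lies on the Nehari manifold
near `w₀`. At a maximum, `J (t (w₀ + s h)) < φ_{w₀}(t) ≤ φ_{w₀}(1) = J w₀`; at a minimum,
`J (t (w₀ + s h)) ≤ φ_{w₀ + s h}(1) < φ_{w₀}(1) = J w₀`. Either way the local minimality of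
`w₀` on the Nehari manifold is contradicted. -/

section Calculus

variable {W : Type*} [NormedAddCommGroup W] [NormedSpace ℝ W] {J : W → ℝ}

def fiberingMap (J : W → ℝ) (w : W) (t : ℝ) : ℝ := J (t • w)

theorem hasDerivAt_apply_add_smul {x v : W} {τ : ℝ} (hJ : DifferentiableAt ℝ J (x + τ • v)) :
    HasDerivAt (fun σ : ℝ => J (x + σ • v)) (fderiv ℝ J (x + τ • v) v) τ := by
  have hline : HasDerivAt (fun σ : ℝ => x + σ • v) v τ := by
    simpa using ((hasDerivAt_id τ).smul_const v).const_add x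
  exact hJ.hasFDerivAt.comp_hasDerivAt τ hline

theorem hasDerivAt_fiberingMap {v : W} {τ : ℝ} (hJ : DifferentiableAt ℝ J (τ • v)) :
    HasDerivAt (fiberingMap J v) (fderiv ℝ J (τ • v) v) τ := by
  show HasDerivAt (fun σ : ℝ => J (σ • v)) _ τ
  simpa using hasDerivAt_apply_add_smul (x := (0 : W)) (v := v) (by rwa [zero_add])

theorem fderiv_apply_self_eq_zero_of_isLocalExtr {u : W} {t : ℝ}
    (hJ : DifferentiableAt ℝ J (t • u)) (h : IsLocalExtr (fiberingMap J u) t) :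
    fderiv ℝ J (t • u) (t • u) = 0 := by
  rw [map_smul, h.hasDerivAt_eq_zero (hasDerivAt_fiberingMap hJ), smul_zero]

theorem Convex.apply_lt_apply_add_smul_of_fderiv_pos {U : Set W} (hU : Convex ℝ U)
    (hJ : ∀ x ∈ U, DifferentiableAt ℝ J x) {v : W} (hpos : ∀ x ∈ U, 0 < fderiv ℝ J x v)
    {x : W} (hx : x ∈ U) {c : ℝ} (hc : 0 < c) (hxc : x + c • v ∈ U) :
    J x < J (x + c • v) := by
  have hseg : ∀ σ ∈ Icc 0 c, x + σ • v ∈ U := fun σ hσ => by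
    simpa [smul_smul, div_mul_cancel₀ _ hc.ne'] using
      hU.add_smul_mem hx hxc ⟨div_nonneg hσ.1 hc.le, (div_le_one hc).2 hσ.2⟩
  have hderiv : ∀ σ ∈ Icc 0 c,
      HasDerivAt (fun σ : ℝ => J (x + σ • v)) (fderiv ℝ J (x + σ • v) v) σ :=
    fun σ hσ => hasDerivAt_apply_add_smul (hJ _ (hseg σ hσ))
  have hmono : StrictMonoOn (fun σ : ℝ => J (x + σ • v)) (Icc 0 c) := by
    refine strictMonoOn_of_deriv_pos (convex_Icc 0 c)
      (fun σ hσ => (hderiv σ hσ).continuousAt.continuousWithinAt) fun σ hσ => ?_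
    rw [interior_Icc] at hσ
    rw [(hderiv σ (Ioo_subset_Icc_self hσ)).deriv]
    exact hpos _ (hseg σ (Ioo_subset_Icc_self hσ))
  simpa using hmono ⟨le_rfl, hc.le⟩ ⟨hc.le, le_rfl⟩ hc

end Calculus

section SecondDerivative

variable {f : ℝ → ℝ} {x₀ : ℝ}

theorem eventually_nhdsNE_lt_of_deriv_deriv_neg (hc : Continuous f)
    (hf : deriv (deriv f) x₀ < 0) (hd : deriv f x₀ = 0) :
    ∀ᶠ x in 𝓝[≠] x₀, f x < f x₀ := by
  have hsign : ∀ᶠ x in 𝓝[≠] x₀, SignType.sign (deriv f x) = SignType.sign (x₀ - x) :=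
    nhdsWithin_le_nhds (eventually_nhdsWithin_sign_eq_of_deriv_neg hf hd)
  rw [← nhdsLT_sup_nhdsGT, eventually_sup]
  constructor
  · obtain ⟨a, ha, hpos⟩ :=
      mem_nhdsLT_iff_exists_Ioo_subset.mp (deriv_pos_left_of_sign_deriv hsign)
    have hmono : StrictMonoOn f (Icc a x₀) := strictMonoOn_of_deriv_pos (convex_Icc a x₀)
      hc.continuousOn fun x hx => hpos (by rwa [interior_Icc] at hx)
    filter_upwards [Ioo_mem_nhdsLT ha] with x hx
    exact hmono ⟨hx.1.le, hx.2.le⟩ ⟨ha.le, le_rfl⟩ hx.2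
  · obtain ⟨b, hb, hneg⟩ :=
      mem_nhdsGT_iff_exists_Ioo_subset.mp (deriv_neg_right_of_sign_deriv hsign)
    have hanti : StrictAntiOn f (Icc x₀ b) := strictAntiOn_of_deriv_neg (convex_Icc x₀ b)
      hc.continuousOn fun x hx => hneg (by rwa [interior_Icc] at hx)
    filter_upwards [Ioo_mem_nhdsGT hb] with x hx
    exact hanti ⟨le_rfl, hb.le⟩ ⟨hx.1.le, hx.2.le⟩ hx.1

theorem eventually_nhdsNE_lt_of_deriv_deriv_pos (hc : Continuous f)
    (hf : 0 < deriv (deriv f) x₀) (hd : deriv f x₀ = 0) :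
    ∀ᶠ x in 𝓝[≠] x₀, f x₀ < f x := by
  simpa using eventually_nhdsNE_lt_of_deriv_deriv_neg (f := fun x => -f x) hc.neg
    (by simpa [deriv.neg'] using hf) (by simpa [deriv.neg'] using hd)

end SecondDerivative

section Persistence

variable {g : ℝ → ℝ → ℝ} {s₀ t₀ : ℝ} {T : Set ℝ}

theorem eventually_exists_isLocalMax_mem (hg : Continuous (uncurry g))
    (hmax : ∀ᶠ t in 𝓝[≠] t₀, g s₀ t < g s₀ t₀) (hT : T ∈ 𝓝 t₀) :
    ∀ᶠ s in 𝓝 s₀, ∃ t ∈ T, IsLocalMax (g s) t ∧ g s t₀ ≤ g s t := by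
  obtain ⟨l, u, ⟨hlt₀, ht₀u⟩, hlu⟩ := mem_nhds_iff_exists_Ioo_subset.mp hT
  obtain ⟨a, hla, hat₀, ha⟩ : ∃ a, l < a ∧ a < t₀ ∧ g s₀ a < g s₀ t₀ :=
    ((Eventually.filter_mono (nhdsLT_le_nhdsNE t₀) hmax).and (Ioo_mem_nhdsLT hlt₀)).exists.imp
      fun _ h => ⟨h.2.1, h.2.2, h.1⟩
  obtain ⟨b, ht₀b, hbu, hb⟩ : ∃ b, t₀ < b ∧ b < u ∧ g s₀ b < g s₀ t₀ :=
    ((Eventually.filter_mono (nhdsGT_le_nhdsNE t₀) hmax).and (Ioo_mem_nhdsGT ht₀u)).exists.imp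
      fun _ h => ⟨h.2.1, h.2.2, h.1⟩
  have hcont : ∀ t, Continuous fun s => g s t := fun t => hg.uncurry_right t
  filter_upwards [((hcont a).tendsto s₀).eventually_lt ((hcont t₀).tendsto s₀) ha,
    ((hcont b).tendsto s₀).eventually_lt ((hcont t₀).tendsto s₀) hb] with s hsa hsb
  have ht₀ : t₀ ∈ Icc a b := ⟨hat₀.le, ht₀b.le⟩
  obtain ⟨t, ht, hmaxOn⟩ :=
    isCompact_Icc.exists_isMaxOn ⟨t₀, ht₀⟩ (hg.uncurry_left s).continuousOn
  have hle : g s t₀ ≤ g s t := hmaxOn ht₀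
  have hta : a < t := lt_of_le_of_ne ht.1 (by rintro rfl; linarith)
  have htb : t < b := lt_of_le_of_ne ht.2 (by rintro rfl; linarith)
  exact ⟨t, hlu ⟨hla.trans hta, htb.trans hbu⟩, hmaxOn.isLocalMax (Icc_mem_nhds hta htb), hle⟩

theorem eventually_exists_isLocalMin_mem (hg : Continuous (uncurry g))
    (hmin : ∀ᶠ t in 𝓝[≠] t₀, g s₀ t₀ < g s₀ t) (hT : T ∈ 𝓝 t₀) :
    ∀ᶠ s in 𝓝 s₀, ∃ t ∈ T, IsLocalMin (g s) t ∧ g s t ≤ g s t₀ := by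
  have hneg := eventually_exists_isLocalMax_mem (g := fun s t => -g s t)
    hg.neg (by simpa using hmin) hT
  filter_upwards [hneg] with s ⟨t, htT, hloc, hle⟩
  exact ⟨t, htT, by simpa using hloc.neg, by simpa using hle⟩

end Persistence

section Nehari

variable {W : Type*} [NormedAddCommGroup W] [NormedSpace ℝ W] {J : W → ℝ}

def nehariManifold (J : W → ℝ) : Set W := {w | w ≠ 0 ∧ fderiv ℝ J w w = 0}

theorem ContinuousLinearMap.exists_apply_pos {f : W →L[ℝ] ℝ} (hf : f ≠ 0) : ∃ h, 0 < f h := by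
  obtain ⟨x, hx⟩ := ContinuousLinearMap.exists_ne_zero hf
  rcases hx.lt_or_gt with hneg | hpos
  · exact ⟨-x, by simpa using hneg⟩
  · exact ⟨x, hpos⟩

theorem exists_mem_nhds_one_fiberingMap_perturb (hJ : ContDiff ℝ 1 J) {w₀ h : W}
    (hw₀ : w₀ ≠ 0) (hmin : IsLocalMinOn J (nehariManifold J) w₀)
    (hh : 0 < fderiv ℝ J w₀ h) :
    ∃ T ∈ 𝓝 (1 : ℝ), ∀ᶠ s in 𝓝[<] (0 : ℝ), ∀ t ∈ T,
      fiberingMap J (w₀ + s • h) t < fiberingMap J w₀ t ∧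
      (IsLocalExtr (fiberingMap J (w₀ + s • h)) t → J w₀ ≤ fiberingMap J (w₀ + s • h) t) := by
  have hJd : Differentiable ℝ J := hJ.differentiable one_ne_zero
  obtain ⟨ρ, hρ, hball⟩ : ∃ ρ > 0, ∀ x ∈ Metric.ball w₀ ρ, 0 < fderiv ℝ J x h ∧
      (x ∈ nehariManifold J → J w₀ ≤ J x) ∧ x ≠ 0 :=
    Metric.eventually_nhds_iff_ball.mp <|
      ((hJ.continuous_fderiv one_ne_zero).clm_apply continuous_const |>.tendsto w₀
        |>.eventually (lt_mem_nhds hh)).and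
      ((eventually_nhdsWithin_iff.mp hmin).and (eventually_ne_nhds hw₀))
  have hcurve : Tendsto (fun p : ℝ × ℝ => p.2 • (w₀ + p.1 • h)) (𝓝 0 ×ˢ 𝓝 1) (𝓝 w₀) := by
    rw [← nhds_prod_eq]
    simpa using (show Continuous fun p : ℝ × ℝ => p.2 • (w₀ + p.1 • h) by fun_prop).tendsto (0, 1)
  obtain ⟨S, hS, T, hT, hST⟩ := eventually_prod_iff.mp (hcurve (Metric.ball_mem_nhds w₀ hρ))
  refine ⟨{t | T t ∧ 0 < t}, hT.and (eventually_gt_nhds one_pos), ?_⟩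
  filter_upwards [nhdsWithin_le_nhds hS, self_mem_nhdsWithin] with s hs (hs0 : s < 0)
  rintro t ⟨ht, ht0⟩
  have hx : t • (w₀ + s • h) ∈ Metric.ball w₀ ρ := hST hs ht
  refine ⟨?_, fun hext => (hball _ hx).2.1 ⟨(hball _ hx).2.2,
    fderiv_apply_self_eq_zero_of_isLocalExtr (hJd _) hext⟩⟩
  have hshift : t • (w₀ + s • h) + (-(s * t)) • h = t • w₀ := by module
  have hx₀ : t • w₀ ∈ Metric.ball w₀ ρ := by simpa using hST hS.self_of_nhds ht
  have hdesc := (convex_ball w₀ ρ).apply_lt_apply_add_smul_of_fderiv_pos (fun x _ => hJd x)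
    (fun x hx => (hball x hx).1) hx (c := -(s * t)) (by nlinarith) (by rwa [hshift])
  rwa [hshift] at hdesc

end Nehari

theorem stmt0_general
    {W : Type*} [NormedAddCommGroup W] [NormedSpace ℝ W]
    (J : W → ℝ) (hJ : ContDiff ℝ 1 J)
    (N : Set W)
    (hN : N = {w : W | w ≠ 0 ∧ fderiv ℝ J w w = 0})
    (w₀ : W) (hw₀ : w₀ ∈ N)
    (hmin : IsLocalMinOn J N w₀)
    (hnondeg : deriv (deriv (fun t : ℝ => J (t • w₀))) 1 ≠ 0) :
    fderiv ℝ J w₀ = 0 := by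
  subst hN
  change deriv (deriv (fiberingMap J w₀)) 1 ≠ 0 at hnondeg
  by_contra hne
  obtain ⟨h, hh⟩ := ContinuousLinearMap.exists_apply_pos hne
  obtain ⟨T, hT, hpert⟩ := exists_mem_nhds_one_fiberingMap_perturb hJ hw₀.1 hmin hh
  set g : ℝ → ℝ → ℝ := fun s => fiberingMap J (w₀ + s • h)
  have hg : Continuous (uncurry g) := hJ.continuous.comp (by fun_prop)
  have hg0 : g 0 = fiberingMap J w₀ := by simp [g]
  have hφ : Continuous (fiberingMap J w₀) := hg0 ▸ hg.uncurry_left 0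
  have hφ' : deriv (fiberingMap J w₀) 1 = 0 := by
    rw [(hasDerivAt_fiberingMap (hJ.differentiable one_ne_zero _)).deriv, one_smul]
    exact hw₀.2
  have hφ1 : fiberingMap J w₀ 1 = J w₀ := by simp [fiberingMap]
  rcases hnondeg.lt_or_gt with hneg | hpos
  · have hstrict := eventually_nhdsNE_lt_of_deriv_deriv_neg hφ hneg hφ'
    have hloc := isLocalMax_of_deriv_deriv_neg hneg hφ' hφ.continuousAt
    obtain ⟨s, hs, t, ⟨htT, (ht1 : fiberingMap J w₀ t ≤ fiberingMap J w₀ 1)⟩, htmax, -⟩ :=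
      (hpert.and (nhdsWithin_le_nhds
        (eventually_exists_isLocalMax_mem hg (hg0 ▸ hstrict) (inter_mem hT hloc)))).exists
    linarith [(hs t htT).1, (hs t htT).2 htmax.isExtr]
  · have hstrict := eventually_nhdsNE_lt_of_deriv_deriv_pos hφ hpos hφ'
    obtain ⟨s, hs, t, htT, htmin, hle⟩ := (hpert.and (nhdsWithin_le_nhds
      (eventually_exists_isLocalMin_mem hg (hg0 ▸ hstrict) hT))).exists
    linarith [(hs 1 (mem_of_mem_nhds hT)).1, (hs t htT).2 htmin.isExtr]

/-- Lemma 2.1: a local minimizer of `J` on the Nehari manifold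
`N = {w ≠ 0 : ⟨J'(w), w⟩ = 0}` which is nondegenerate along its ray
(the second derivative of `t ↦ J (t • w₀)` at `t = 1` is nonzero)
is a critical point of `J` on all of `W`. -/
theorem stmt0
    {W : Type*} [NormedAddCommGroup W] [NormedSpace ℝ W] [CompleteSpace W]
    (hrefl : Function.Surjective (NormedSpace.inclusionInDoubleDual ℝ W))
    (J : W → ℝ) (hJ : ContDiff ℝ 1 J)
    (N : Set W)
    (hN : N = {w : W | w ≠ 0 ∧ fderiv ℝ J w w = 0})
    (w₀ : W) (hw₀ : w₀ ∈ N)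
    (hmin : IsLocalMinOn J N w₀)
    (hnondeg : deriv (deriv (fun t : ℝ => J (t • w₀))) 1 ≠ 0) :
    fderiv ℝ J w₀ = 0 :=
  stmt0_general J hJ N hN w₀ hw₀ hmin hnondeg
end

section
/- Let p > 2 and let M, A, B > 0, and suppose p < r. Define φ(t) = (t^p/p)M − (t^r/r)A − t·B for t > 0. If B is sufficiently small (explicitly, if B < c·M^{(r-1)/(r-p)}·A^{-(p-1)/(r-p)} for a suitable constant c = c(p,r) > 0), then φ' has exactly two positive zeros t₁ < t₂, with φ''(t₁) > 0 and φ''(t₂) < 0, and φ(t₁) < 0. -/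
open Real Set

/-!
Write `φ'(t) = g(t) - B` with `g(t) = t^(p-1) M - t^(r-1) A = t^(p-1) (M - t^(r-p) A)`.
The sign of `g'(t) = t^(p-2) ((p-1) M - (r-1) t^(r-p) A)` shows that `g` increases from
`g(0) = 0` up to the peak `t* = ((p-1)M/((r-1)A))^(1/(r-p))`, then decreases, vanishing again
at `(M/A)^(1/(r-p))`.
The peak value `g(t*)` is exactly the threshold `c M^((r-1)/(r-p)) A^(-(p-1)/(r-p))`, so for `B`
below it `φ'` has one zero `t₁ < t*` and one zero `t₂ > t*`, with `φ'' = g'` of opposite signs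
there. Finally `φ' < 0` on `(0, t₁)` and `φ(0) = 0` give `φ(t₁) < 0`.
-/

theorem exists_two_zeros_of_strictMonoOn_of_strictAntiOn {f : ℝ → ℝ} {a m T : ℝ}
    (hf : ContinuousOn f (Ici a)) (hmono : StrictMonoOn f (Icc a m))
    (hanti : StrictAntiOn f (Ici m)) (ham : a ≤ m) (hmT : m ≤ T) (ha : f a < 0) (hm : 0 < f m)
    (hT : f T < 0) :
    ∃ t₁ t₂, t₁ ∈ Ioo a m ∧ t₂ ∈ Ioo m T ∧ f t₁ = 0 ∧ f t₂ = 0 ∧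
      ∀ t, a ≤ t → f t = 0 → t = t₁ ∨ t = t₂ := by
  obtain ⟨t₁, ht₁, hf₁⟩ := intermediate_value_Ioo ham (hf.mono Icc_subset_Ici_self)
    (show (0 : ℝ) ∈ Ioo (f a) (f m) from ⟨ha, hm⟩)
  obtain ⟨t₂, ht₂, hf₂⟩ := intermediate_value_Ioo' hmT
    (hf.mono (Icc_subset_Ici_iff hmT |>.2 ham))
    (show (0 : ℝ) ∈ Ioo (f T) (f m) from ⟨hT, hm⟩)
  refine ⟨t₁, t₂, ht₁, ht₂, hf₁, hf₂, fun t hat ht ↦ ?_⟩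
  rcases le_total t m with htm | hmt
  · exact .inl <| hmono.injOn ⟨hat, htm⟩ (Ioo_subset_Icc_self ht₁) (ht.trans hf₁.symm)
  · exact .inr <| hanti.injOn hmt ht₂.1.le (ht.trans hf₂.symm)

noncomputable section

def fibering (p r M A B t : ℝ) : ℝ := t ^ p / p * M - t ^ r / r * A - t * B

def fiberingDeriv (p r M A B t : ℝ) : ℝ := t ^ (p - 1) * M - t ^ (r - 1) * A - B

def fiberingDeriv2 (p r M A t : ℝ) : ℝ := (p - 1) * t ^ (p - 2) * M - (r - 1) * t ^ (r - 2) * A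

def peakPoint (p r M A : ℝ) : ℝ := ((p - 1) * M / ((r - 1) * A)) ^ (r - p)⁻¹

def peakConst (p r : ℝ) : ℝ := ((p - 1) / (r - 1)) ^ ((p - 1) / (r - p)) * ((r - p) / (r - 1))

variable {p r M A B t : ℝ}

theorem hasDerivAt_fibering (hp : p ≠ 0) (hr : r ≠ 0) (ht : t ≠ 0) :
    HasDerivAt (fibering p r M A B) (fiberingDeriv p r M A B t) t := by
  have hP := ((hasDerivAt_rpow_const (p := p) (Or.inl ht)).div_const p).mul_const M
  have hR := ((hasDerivAt_rpow_const (p := r) (Or.inl ht)).div_const r).mul_const A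
  refine ((hP.sub hR).sub ((hasDerivAt_id t).mul_const B)).congr_deriv ?_
  rw [fiberingDeriv]
  field_simp

theorem hasDerivAt_fiberingDeriv (ht : t ≠ 0) :
    HasDerivAt (fiberingDeriv p r M A B) (fiberingDeriv2 p r M A t) t := by
  have hP := (hasDerivAt_rpow_const (p := p - 1) (Or.inl ht)).mul_const M
  have hR := (hasDerivAt_rpow_const (p := r - 1) (Or.inl ht)).mul_const A
  refine ((hP.sub hR).sub_const B).congr_deriv ?_
  simp only [fiberingDeriv2]
  ring_nf

theorem deriv_fibering (hp : p ≠ 0) (hr : r ≠ 0) (ht : t ≠ 0) :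
    deriv (fibering p r M A B) t = fiberingDeriv p r M A B t :=
  (hasDerivAt_fibering hp hr ht).deriv

theorem iteratedDeriv_two_fibering (hp : p ≠ 0) (hr : r ≠ 0) (ht : t ≠ 0) :
    iteratedDeriv 2 (fibering p r M A B) t = fiberingDeriv2 p r M A t := by
  have hderiv : deriv (fibering p r M A B) =ᶠ[nhds t] fiberingDeriv p r M A B :=
    Filter.mem_of_superset (isOpen_ne.mem_nhds ht) fun _ hs ↦ deriv_fibering hp hr hs
  rw [iteratedDeriv_succ, iteratedDeriv_one, hderiv.deriv_eq]
  exact (hasDerivAt_fiberingDeriv ht).deriv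

theorem continuous_fibering (hp : 0 ≤ p) (hr : 0 ≤ r) : Continuous (fibering p r M A B) := by
  unfold fibering
  fun_prop (disch := assumption)

theorem continuous_fiberingDeriv (hp : 1 ≤ p) (hr : 1 ≤ r) :
    Continuous (fiberingDeriv p r M A B) := by
  have hp' : 0 ≤ p - 1 := by linarith
  have hr' : 0 ≤ r - 1 := by linarith
  unfold fiberingDeriv
  fun_prop (disch := assumption)

theorem fiberingDeriv_zero (hp : 1 < p) (hr : 1 < r) : fiberingDeriv p r M A B 0 = -B := by
  simp [fiberingDeriv, zero_rpow (sub_pos.2 hp).ne', zero_rpow (sub_pos.2 hr).ne']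

theorem fibering_zero (hp : p ≠ 0) (hr : r ≠ 0) : fibering p r M A B 0 = 0 := by
  simp [fibering, zero_rpow hp, zero_rpow hr]

theorem fiberingDeriv_eq_mul (ht : 0 < t) :
    fiberingDeriv p r M A B t = t ^ (p - 1) * (M - A * t ^ (r - p)) - B := by
  have hsplit : t ^ (r - 1) = t ^ (p - 1) * t ^ (r - p) := by
    rw [← rpow_add ht]
    ring_nf
  rw [fiberingDeriv, hsplit]
  ring

theorem fiberingDeriv2_eq_mul (ht : 0 < t) :
    fiberingDeriv2 p r M A t = t ^ (p - 2) * ((p - 1) * M - (r - 1) * A * t ^ (r - p)) := by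
  have hsplit : t ^ (r - 2) = t ^ (p - 2) * t ^ (r - p) := by
    rw [← rpow_add ht]
    ring_nf
  rw [fiberingDeriv2, hsplit]
  ring

theorem lt_peakPoint_iff (hp : 1 < p) (hpr : p < r) (hM : 0 < M) (hA : 0 < A) (ht : 0 ≤ t) :
    t < peakPoint p r M A ↔ t ^ (r - p) * ((r - 1) * A) < (p - 1) * M := by
  have hr : 0 < r - 1 := by linarith
  rw [peakPoint, lt_rpow_inv_iff_of_pos ht (by positivity) (by linarith),
    lt_div_iff₀ (by positivity)]

theorem peakPoint_lt_iff (hp : 1 < p) (hpr : p < r) (hM : 0 < M) (hA : 0 < A) (ht : 0 ≤ t) :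
    peakPoint p r M A < t ↔ (p - 1) * M < t ^ (r - p) * ((r - 1) * A) := by
  have hr : 0 < r - 1 := by linarith
  have hp' : 0 < p - 1 := by linarith
  rw [peakPoint, rpow_inv_lt_iff_of_pos (by positivity) ht (by linarith),
    div_lt_iff₀ (by positivity)]

theorem fiberingDeriv2_pos (hp : 1 < p) (hpr : p < r) (hM : 0 < M) (hA : 0 < A) (ht : 0 < t)
    (htm : t < peakPoint p r M A) : 0 < fiberingDeriv2 p r M A t := by
  have hlt := (lt_peakPoint_iff hp hpr hM hA ht.le).1 htm
  rw [fiberingDeriv2_eq_mul ht]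
  exact mul_pos (rpow_pos_of_pos ht _) (by linarith)

theorem fiberingDeriv2_neg (hp : 1 < p) (hpr : p < r) (hM : 0 < M) (hA : 0 < A) (ht : 0 < t)
    (hmt : peakPoint p r M A < t) : fiberingDeriv2 p r M A t < 0 := by
  have hlt := (peakPoint_lt_iff hp hpr hM hA ht.le).1 hmt
  rw [fiberingDeriv2_eq_mul ht]
  exact mul_neg_of_pos_of_neg (rpow_pos_of_pos ht _) (by linarith)

theorem peakPoint_pos (hp : 1 < p) (hpr : p < r) (hM : 0 < M) (hA : 0 < A) :
    0 < peakPoint p r M A := by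
  have hr : 0 < r - 1 := by linarith
  have hp' : 0 < p - 1 := by linarith
  unfold peakPoint
  positivity

theorem strictMonoOn_fiberingDeriv (hp : 1 < p) (hpr : p < r) (hM : 0 < M) (hA : 0 < A) :
    StrictMonoOn (fiberingDeriv p r M A B) (Icc 0 (peakPoint p r M A)) := by
  refine strictMonoOn_of_deriv_pos (convex_Icc _ _)
    (continuous_fiberingDeriv hp.le (by linarith)).continuousOn fun t ht ↦ ?_
  rw [interior_Icc] at ht
  rw [(hasDerivAt_fiberingDeriv ht.1.ne').deriv]
  exact fiberingDeriv2_pos hp hpr hM hA ht.1 ht.2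

theorem strictAntiOn_fiberingDeriv (hp : 1 < p) (hpr : p < r) (hM : 0 < M) (hA : 0 < A) :
    StrictAntiOn (fiberingDeriv p r M A B) (Ici (peakPoint p r M A)) := by
  refine strictAntiOn_of_deriv_neg (convex_Ici _)
    (continuous_fiberingDeriv hp.le (by linarith)).continuousOn fun t ht ↦ ?_
  rw [interior_Ici] at ht
  have ht0 : 0 < t := (peakPoint_pos hp hpr hM hA).trans ht
  rw [(hasDerivAt_fiberingDeriv ht0.ne').deriv]
  exact fiberingDeriv2_neg hp hpr hM hA ht0 ht

theorem peakPoint_lt_rpow_inv (hp : 1 < p) (hpr : p < r) (hM : 0 < M) (hA : 0 < A) :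
    peakPoint p r M A < (M / A) ^ (r - p)⁻¹ := by
  have hr : 0 < r - 1 := by linarith
  have hp' : 0 < p - 1 := by linarith
  refine rpow_lt_rpow (by positivity) ?_ (inv_pos.2 (by linarith))
  rw [mul_div_mul_comm]
  exact mul_lt_of_lt_one_left (by positivity) ((div_lt_one hr).2 (by linarith))

theorem fiberingDeriv_rpow_inv (hpr : p < r) (hM : 0 < M) (hA : 0 < A) :
    fiberingDeriv p r M A B ((M / A) ^ (r - p)⁻¹) = -B := by
  rw [fiberingDeriv_eq_mul (by positivity), rpow_inv_rpow (by positivity) (by linarith),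
    mul_div_cancel₀ _ hA.ne']
  simp

theorem fiberingDeriv_peakPoint (hp : 1 < p) (hpr : p < r) (hM : 0 < M) (hA : 0 < A) :
    fiberingDeriv p r M A B (peakPoint p r M A) =
      peakConst p r * M ^ ((r - 1) / (r - p)) * A ^ (-(p - 1) / (r - p)) - B := by
  have hq : 0 < r - p := by linarith
  have hr : 0 < r - 1 := by linarith
  have hp' : 0 < p - 1 := by linarith
  set e := (p - 1) / (r - p) with he
  have hpow : peakPoint p r M A ^ (p - 1) = ((p - 1) / (r - 1)) ^ e * (M ^ e / A ^ e) := by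
    rw [peakPoint, ← rpow_mul (by positivity), mul_div_mul_comm,
      mul_rpow (by positivity) (by positivity), div_rpow hM.le hA.le, inv_mul_eq_div]
  have hMe : M ^ ((r - 1) / (r - p)) = M ^ e * M := by
    rw [← rpow_add_one hM.ne']
    congr 1
    rw [he]
    field_simp
    ring
  have hAe : A ^ (-(p - 1) / (r - p)) = (A ^ e)⁻¹ := by
    rw [neg_div, rpow_neg hA.le]
  have hAe_pos : 0 < A ^ e := rpow_pos_of_pos hA e
  rw [fiberingDeriv_eq_mul (peakPoint_pos hp hpr hM hA), peakPoint,
    rpow_inv_rpow (by positivity) hq.ne', ← peakPoint, hpow, hMe, hAe, peakConst, ← he]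
  field_simp
  ring

theorem fibering_neg_of_fiberingDeriv_eq_zero (hp : 1 < p) (hpr : p < r) (hM : 0 < M)
    (hA : 0 < A) (ht : 0 < t) (htm : t ≤ peakPoint p r M A)
    (hcrit : fiberingDeriv p r M A B t = 0) : fibering p r M A B t < 0 := by
  have hanti : StrictAntiOn (fibering p r M A B) (Icc 0 t) := by
    refine strictAntiOn_of_deriv_neg (convex_Icc 0 t)
      (continuous_fibering (by linarith) (by linarith)).continuousOn fun s hs ↦ ?_
    rw [interior_Icc] at hs
    rw [deriv_fibering (by linarith) (by linarith) hs.1.ne', ← hcrit]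
    exact strictMonoOn_fiberingDeriv hp hpr hM hA ⟨hs.1.le, hs.2.le.trans htm⟩ ⟨ht.le, htm⟩
      hs.2
  calc fibering p r M A B t < fibering p r M A B 0 :=
        hanti (left_mem_Icc.2 ht.le) (right_mem_Icc.2 ht.le) ht
    _ = 0 := fibering_zero (by linarith) (by linarith)

theorem peakConst_pos (hp : 1 < p) (hpr : p < r) : 0 < peakConst p r := by
  have hr : 0 < r - 1 := by linarith
  have hp' : 0 < p - 1 := by linarith
  have hq : 0 < r - p := by linarith
  unfold peakConst
  positivity

end

/-- Corollary 3.2(ii), model form: for `φ(t) = (t^p/p)M − (t^r/r)A − tB`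
with `2 < p < r` and `M, A, B > 0`, if `B` is small enough (below an
explicit threshold `c(p,r)·M^{(r-1)/(r-p)}·A^{-(p-1)/(r-p)}`), then `φ'`
has exactly two positive zeros `t₁ < t₂`, with `φ''(t₁) > 0`,
`φ''(t₂) < 0` and `φ(t₁) < 0`. -/
theorem stmt2 (p r : ℝ) (hp : 2 < p) (hpr : p < r) :
    ∃ c > 0, ∀ M A B : ℝ, 0 < M → 0 < A → 0 < B →
      B < c * M ^ ((r - 1) / (r - p)) * A ^ (-(p - 1) / (r - p)) →
      ∀ φ : ℝ → ℝ, (∀ t, φ t = t ^ p / p * M - t ^ r / r * A - t * B) →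
        ∃ t₁ t₂ : ℝ, 0 < t₁ ∧ t₁ < t₂ ∧
          deriv φ t₁ = 0 ∧ deriv φ t₂ = 0 ∧
          (∀ t > 0, deriv φ t = 0 → t = t₁ ∨ t = t₂) ∧
          0 < iteratedDeriv 2 φ t₁ ∧ iteratedDeriv 2 φ t₂ < 0 ∧
          φ t₁ < 0 := by
  have hp1 : 1 < p := by linarith
  have hp0 : p ≠ 0 := by linarith
  have hr0 : r ≠ 0 := by linarith
  refine ⟨peakConst p r, peakConst_pos hp1 hpr, fun M A B hM hA hB hsmall φ hφ ↦ ?_⟩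
  obtain rfl : φ = fibering p r M A B := funext hφ
  have hm := peakPoint_pos hp1 hpr hM hA
  obtain ⟨t₁, t₂, ⟨ht₁, ht₁m⟩, ⟨hmt₂, -⟩, hcrit₁, hcrit₂, honly⟩ :=
    exists_two_zeros_of_strictMonoOn_of_strictAntiOn
      (continuous_fiberingDeriv hp1.le (by linarith)).continuousOn
      (strictMonoOn_fiberingDeriv (B := B) hp1 hpr hM hA)
      (strictAntiOn_fiberingDeriv hp1 hpr hM hA)
      hm.le (peakPoint_lt_rpow_inv hp1 hpr hM hA).le
      (by rw [fiberingDeriv_zero hp1 (by linarith)]; linarith)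
      (by rw [fiberingDeriv_peakPoint hp1 hpr hM hA]; linarith)
      (by rw [fiberingDeriv_rpow_inv hpr hM hA]; linarith)
  have ht₂ := hm.trans hmt₂
  refine ⟨t₁, t₂, ht₁, ht₁m.trans hmt₂, ?_, ?_, fun t ht hcrit ↦ ?_, ?_, ?_,
    fibering_neg_of_fiberingDeriv_eq_zero hp1 hpr hM hA ht₁ ht₁m.le hcrit₁⟩
  · rwa [deriv_fibering hp0 hr0 ht₁.ne']
  · rwa [deriv_fibering hp0 hr0 ht₂.ne']
  · exact honly t ht.le (by rwa [deriv_fibering hp0 hr0 ht.ne'] at hcrit)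
  · rw [iteratedDeriv_two_fibering hp0 hr0 ht₁.ne']
    exact fiberingDeriv2_pos hp1 hpr hM hA ht₁ ht₁m
  · rw [iteratedDeriv_two_fibering hp0 hr0 ht₂.ne']
    exact fiberingDeriv2_neg hp1 hpr hM hA ht₂ hmt₂
end

section
/- Let p > 2 and r with p < r < p* where p* = pN/(N−p) (N > p). Let Ω ⊂ ℝ^N be a bounded smooth domain and W = W^{1,p}(Ω) × W^{1,p}(Ω) with norm ‖(u,v)‖^p = ∫_Ω(|∇u|^p + m₁|u|^p) + ∫_Ω(|∇v|^p + m₂|v|^p) where m₁, m₂ ∈ C(Ω̄) are positive. Suppose f satisfies f(x,u,v) ≤ C₁(u^r + v^r) on ∂Ω × ℝ₊² and g satisfies |g(x,u,v)| ≤ C(1 + |u|^p + |v|^p) on Ω. Then for all small enough λ, μ > 0, the functional J(u,v) = (1/p)‖(u,v)‖^p − ∫_{∂Ω} f(x,|u|,|v|) − (λ+μ)∫_Ω g(x,|u|,|v|) restricted to the Nehari manifold N = {(u,v) ≠ 0 : ⟨J'(u,v),(u,v)⟩ = 0} is coercive and bounded below. -/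
/-!
On the Nehari manifold the constraint gives `⟨F'(w),w⟩ = ‖w‖^p − (λ+μ)⟨G'(w),w⟩`, so
`F w ≤ (1/r)⟨F'(w),w⟩` bounds the boundary term by `(1/r)(‖w‖^p − (λ+μ)⟨G'(w),w⟩)`, and the
growth bounds on `G` give `J w ≥ (1/p − 1/r)‖w‖^p − (λ+μ)(1/r + 1)Cg(1 + ‖w‖^p)`. Once `λ + μ`
is so small that the error term costs at most half of `1/p − 1/r`, this is `≥ c‖w‖^p − c`
with `c > 0`.
-/

open Filter

theorem add_mul_le_of_nehari {r Cg s t F G F' G' : ℝ} (hr : 0 < r) (hs : 0 ≤ s)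
    (hF : F ≤ 1 / r * F') (hnehari : t - F' - s * G' = 0)
    (hG : |G| ≤ Cg * (1 + t)) (hG' : |G'| ≤ Cg * (1 + t)) :
    F + s * G ≤ 1 / r * t + s * ((1 / r + 1) * Cg * (1 + t)) := by
  have hsG : s * G ≤ s * (Cg * (1 + t)) := mul_le_mul_of_nonneg_left (abs_le.mp hG).2 hs
  have hsG' : -(s * G') ≤ s * (Cg * (1 + t)) := by
    rw [← mul_neg]
    exact mul_le_mul_of_nonneg_left (neg_le.mp (abs_le.mp hG').1) hs
  have hrsG' : 1 / r * -(s * G') ≤ 1 / r * (s * (Cg * (1 + t))) :=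
    mul_le_mul_of_nonneg_left hsG' (by positivity)
  have hF' : F' = t - s * G' := by linarith
  rw [hF'] at hF
  linarith

theorem exists_forall_norm_ge_of_rpow_lower_bound {W : Type*} [Norm W] {J : W → ℝ} {N : Set W}
    {c d p : ℝ} (hc : 0 < c) (hp : 0 < p) (hJ : ∀ w ∈ N, c * ‖w‖ ^ p - d ≤ J w) (C : ℝ) :
    ∃ R : ℝ, ∀ w ∈ N, R ≤ ‖w‖ → C ≤ J w := by
  have hlim : Tendsto (fun x : ℝ => c * x ^ p - d) atTop atTop :=
    tendsto_atTop_add_const_right _ _ ((tendsto_rpow_atTop hp).const_mul_atTop hc)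
  obtain ⟨R, hR⟩ := tendsto_atTop_atTop.mp hlim C
  exact ⟨R, fun w hw hRw => (hR ‖w‖ hRw).trans (hJ w hw)⟩

theorem bddBelow_image_of_rpow_lower_bound {W : Type*} [SeminormedAddGroup W] {J : W → ℝ}
    {N : Set W} {c d p : ℝ} (hc : 0 ≤ c) (hJ : ∀ w ∈ N, c * ‖w‖ ^ p - d ≤ J w) : BddBelow (J '' N) := by
  refine ⟨-d, ?_⟩
  rintro _ ⟨w, hw, rfl⟩
  have : 0 ≤ c * ‖w‖ ^ p := mul_nonneg hc (Real.rpow_nonneg (norm_nonneg w) p)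
  linarith [hJ w hw]

theorem stmt5_general
    {W : Type*} [NormedAddCommGroup W] [NormedSpace ℝ W]
    (p r Cg : ℝ) (hp : 2 < p) (hpr : p < r) (hCg : 0 < Cg)
    (F G : W → ℝ)
    (hA2 : ∀ w : W, F w ≤ (1 / r) * fderiv ℝ F w w)
    (hGgrow : ∀ w : W, |G w| ≤ Cg * (1 + ‖w‖ ^ p))
    (hG'grow : ∀ w : W, |fderiv ℝ G w w| ≤ Cg * (1 + ‖w‖ ^ p)) :
    ∃ Λ > 0, ∀ lam mu : ℝ, 0 < lam → 0 < mu → lam + mu < Λ →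
      ∀ J : W → ℝ, (∀ w, J w = (1 / p) * ‖w‖ ^ p - F w - (lam + mu) * G w) →
      ∀ N : Set W,
        N = {w : W | w ≠ 0 ∧
          ‖w‖ ^ p - fderiv ℝ F w w - (lam + mu) * fderiv ℝ G w w = 0} →
        (∀ C : ℝ, ∃ R : ℝ, ∀ w ∈ N, R ≤ ‖w‖ → C ≤ J w) ∧
        BddBelow (J '' N) := by
  have hp0 : 0 < p := by linarith
  have hr0 : 0 < r := by linarith
  set a := 1 / p - 1 / r
  set b := (1 / r + 1) * Cg
  have ha : 0 < a := sub_pos.mpr (one_div_lt_one_div_of_lt hp0 hpr)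
  have hb : 0 < b := mul_pos (by positivity) hCg
  refine ⟨a / (2 * b), div_pos ha (by positivity), fun lam mu hlam hmu hΛ J hJ N hN => ?_⟩
  have hsb : (lam + mu) * b ≤ a / 2 := by
    have := mul_le_mul_of_nonneg_right hΛ.le hb.le
    rwa [div_mul_eq_mul_div, mul_div_mul_right _ _ hb.ne'] at this
  have hJN : ∀ w ∈ N, a / 2 * ‖w‖ ^ p - a / 2 ≤ J w := by
    subst hN
    rintro w ⟨-, hw⟩
    have hlow := add_mul_le_of_nehari hr0 (by positivity) (hA2 w) hw
      (hGgrow w) (hG'grow w)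
    have hnorm : 0 ≤ ‖w‖ ^ p := Real.rpow_nonneg (norm_nonneg w) p
    have herr := mul_le_mul_of_nonneg_right hsb (by linarith : (0 : ℝ) ≤ 1 + ‖w‖ ^ p)
    rw [hJ w]
    linarith
  exact ⟨exists_forall_norm_ge_of_rpow_lower_bound (half_pos ha) hp0 hJN,
    bddBelow_image_of_rpow_lower_bound (half_pos ha).le hJN⟩

/-- Theorem 2.1, abstract form: `W` stands for the product Sobolev space
`W^{1,p}(Ω) × W^{1,p}(Ω)` with its norm; `F w = ∫_{∂Ω} f(x,|u|,|v|)` is the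
boundary term and `G w = ∫_Ω g(x,|u|,|v|)` the source term.  The assumptions
encode (A2) (`F w ≤ (1/r)⟨F'(w),w⟩` and the trace-Sobolev growth
`⟨F'(w),w⟩ ≤ C₁‖w‖^r`) and (A4) together with the Sobolev embedding
(`|G w| ≤ Cg(1 + ‖w‖^p)`, `|⟨G'(w),w⟩| ≤ Cg(1 + ‖w‖^p)`), and the fiber
identity `⟨J'(w),w⟩ = ‖w‖^p − ⟨F'(w),w⟩ − (λ+μ)⟨G'(w),w⟩`.  For all
sufficiently small `λ, μ > 0`, the functional
`J w = (1/p)‖w‖^p − F w − (λ+μ) G w` is coercive and bounded below on the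
Nehari manifold `N = {w ≠ 0 : ⟨J'(w),w⟩ = 0}`. -/
theorem stmt5
    {W : Type*} [NormedAddCommGroup W] [NormedSpace ℝ W]
    (p r C₁ Cg : ℝ) (hp : 2 < p) (hpr : p < r) (hC₁ : 0 < C₁) (hCg : 0 < Cg)
    (F G : W → ℝ) (hFd : Differentiable ℝ F) (hGd : Differentiable ℝ G)
    (hA2 : ∀ w : W, F w ≤ (1 / r) * fderiv ℝ F w w)
    (hFgrow : ∀ w : W, fderiv ℝ F w w ≤ C₁ * ‖w‖ ^ r)
    (hGgrow : ∀ w : W, |G w| ≤ Cg * (1 + ‖w‖ ^ p))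
    (hG'grow : ∀ w : W, |fderiv ℝ G w w| ≤ Cg * (1 + ‖w‖ ^ p)) :
    ∃ Λ > 0, ∀ lam mu : ℝ, 0 < lam → 0 < mu → lam + mu < Λ →
      ∀ J : W → ℝ, (∀ w, J w = (1 / p) * ‖w‖ ^ p - F w - (lam + mu) * G w) →
      ∀ N : Set W,
        N = {w : W | w ≠ 0 ∧
          ‖w‖ ^ p - fderiv ℝ F w w - (lam + mu) * fderiv ℝ G w w = 0} →
        (∀ C : ℝ, ∃ R : ℝ, ∀ w ∈ N, R ≤ ‖w‖ → C ≤ J w) ∧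
        BddBelow (J '' N) :=
  stmt5_general p r Cg hp hpr hCg F G hA2 hGgrow hG'grow
end

section
/- Let f : ℝ₊² → ℝ be C² with f(0,0) = 0 and suppose for all (u,v) ∈ ℝ₊², with t = 1: f(u,v) ≤ (1/r)(f_u(u,v)u + f_v(u,v)v) ≤ (1/(r(r−1)))(f_{uu}u² + 2f_{uv}uv + f_{vv}v²), where r > 1. Then for all t ≥ 1 and (u,v) ∈ ℝ₊², f(tu, tv) ≥ t^r f(u,v) whenever f(u,v) ≥ 0. -/
/-!
Along a ray `s ↦ s • x`, the Euler-type inequality `r f ≤ D f · (s • x)` says exactly that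
`s ↦ f (s • x) / s ^ r` has nonnegative derivative, so this quotient is nondecreasing in `s > 0`;
comparing its values at `1` and `t` gives `t ^ r f (x) ≤ f (t • x)`.
-/

open Real

theorem monotoneOn_div_rpow_of_mul_le_mul_deriv {g g' : ℝ → ℝ} {r : ℝ}
    (hg : ∀ s > 0, HasDerivAt g (g' s) s) (hle : ∀ s > 0, r * g s ≤ s * g' s) :
    MonotoneOn (fun s => g s / s ^ r) (Set.Ioi 0) := by
  have hderiv : ∀ s > 0, HasDerivAt (fun s => g s / s ^ r)
      ((g' s * s ^ r - g s * (r * s ^ (r - 1))) / (s ^ r) ^ 2) s := fun s hs =>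
    (hg s hs).div (hasDerivAt_rpow_const (Or.inl hs.ne')) (rpow_pos_of_pos hs r).ne'
  refine monotoneOn_of_hasDerivWithinAt_nonneg (convex_Ioi 0)
    (fun s hs => (hderiv s hs).continuousAt.continuousWithinAt)
    (fun s hs => (hderiv s (interior_subset hs)).hasDerivWithinAt) fun s hs => ?_
  rw [interior_Ioi] at hs
  have hpow : s ^ r = s * s ^ (r - 1) := by
    conv_lhs => rw [← add_sub_cancel 1 r, rpow_add hs, rpow_one]
  have hnum : 0 ≤ g' s * s ^ r - g s * (r * s ^ (r - 1)) := by
    rw [hpow]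
    nlinarith [hle s hs, rpow_pos_of_pos hs (r - 1)]
  positivity

section Ray

variable {E : Type*} [NormedAddCommGroup E] [NormedSpace ℝ E] {f : E → ℝ} {x : E}

theorem hasDerivAt_comp_smul {s : ℝ} (hf : DifferentiableAt ℝ f (s • x)) :
    HasDerivAt (fun s : ℝ => f (s • x)) (fderiv ℝ f (s • x) x) s :=
  hf.hasFDerivAt.comp_hasDerivAt s (by simpa using (hasDerivAt_id s).smul_const x)

theorem monotoneOn_comp_smul_div_rpow {r : ℝ} (hf : Differentiable ℝ f)
    (hle : ∀ s : ℝ, 0 < s → r * f (s • x) ≤ fderiv ℝ f (s • x) (s • x)) :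
    MonotoneOn (fun s => f (s • x) / s ^ r) (Set.Ioi 0) :=
  monotoneOn_div_rpow_of_mul_le_mul_deriv (fun s _ => hasDerivAt_comp_smul (hf _))
    fun s hs => by simpa only [map_smul, smul_eq_mul] using hle s hs

end Ray

theorem stmt8_general
    (r : ℝ) (hr : 1 < r)
    (f : ℝ × ℝ → ℝ) (hf : ContDiff ℝ 2 f)
    (hchain : ∀ u v : ℝ, 0 ≤ u → 0 ≤ v →
      f (u, v) ≤ (1 / r) * fderiv ℝ f (u, v) (u, v) ∧
      (1 / r) * fderiv ℝ f (u, v) (u, v) ≤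
        (1 / (r * (r - 1))) * fderiv ℝ (fun w => fderiv ℝ f w (u, v)) (u, v) (u, v)) :
    ∀ t ≥ (1 : ℝ), ∀ u v : ℝ, 0 ≤ u → 0 ≤ v → 0 ≤ f (u, v) →
      t ^ r * f (u, v) ≤ f (t * u, t * v) := by
  intro t ht u v hu hv _
  have ht0 : 0 < t := one_pos.trans_le ht
  have hle : ∀ s : ℝ, 0 < s → r * f (s • (u, v)) ≤ fderiv ℝ f (s • (u, v)) (s • (u, v)) := by
    intro s hs
    have h := (hchain (s * u) (s * v) (by positivity) (by positivity)).1
    rw [one_div_mul_eq_div, le_div_iff₀ (one_pos.trans hr)] at h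
    simpa only [Prod.smul_mk, smul_eq_mul, mul_comm r] using h
  have hmono := monotoneOn_comp_smul_div_rpow (hf.differentiable (by norm_num)) hle
    (Set.mem_Ioi.2 one_pos) (Set.mem_Ioi.2 ht0) ht
  simp only [one_smul, one_rpow, div_one, Prod.smul_mk, smul_eq_mul] at hmono
  rwa [le_div_iff₀ (rpow_pos_of_pos ht0 r), mul_comm] at hmono

/-- Consequence of (A2): if `f` is C² with `f(0,0) = 0` and satisfies the
homogeneity-type differential inequality
`f(u,v) ≤ (1/r)(f_u u + f_v v) ≤ (1/(r(r−1)))(f_{uu}u² + 2f_{uv}uv + f_{vv}v²)`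
on `ℝ₊²` with `r > 1`, then `f(tu,tv) ≥ t^r f(u,v)` for all `t ≥ 1` and
`(u,v) ∈ ℝ₊²` with `f(u,v) ≥ 0`.  Here `fderiv ℝ f (u,v) (u,v)` is the
first derivative of `t ↦ f(tu,tv)` at `t = 1` and the iterated `fderiv`
is its second derivative. -/
theorem stmt8
    (r : ℝ) (hr : 1 < r)
    (f : ℝ × ℝ → ℝ) (hf : ContDiff ℝ 2 f) (hf0 : f (0, 0) = 0)
    (hchain : ∀ u v : ℝ, 0 ≤ u → 0 ≤ v →
      f (u, v) ≤ (1 / r) * fderiv ℝ f (u, v) (u, v) ∧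
      (1 / r) * fderiv ℝ f (u, v) (u, v) ≤
        (1 / (r * (r - 1))) * fderiv ℝ (fun w => fderiv ℝ f w (u, v)) (u, v) (u, v)) :
    ∀ t ≥ (1 : ℝ), ∀ u v : ℝ, 0 ≤ u → 0 ≤ v → 0 ≤ f (u, v) →
      t ^ r * f (u, v) ≤ f (t * u, t * v) :=
  stmt8_general r hr f hf hchain
end
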